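/- Let m ≥ 2 be an integer, ε = 1/(2m), C > 0, and T_0 a positive integer; set T_k = 2^k T_0 and T^{(k)} = (2^k − 1)T_0 for k ≥ 0 (so T^{(0)} = 0). Let y_1, y_2, … ∈ {0,1} be any outcome sequence and p_1, p_2, … ∈ {M_1,…,M_m} any forecast sequence. Suppose that for every k ≥ 1 and every t with T^{(k−1)} < t ≤ T^{(k)}, the within-block calibration error satisfies ∑_{i=1}^m | ∑_{s=T^{(k−1)}+1}^{t} 1{p_s = M_i}(M_i − y_s) | ≤ ε (t − T^{(k−1)}) + C √(T_{k−1}). Then for every T > T^{(2)}: ∑_{i=1}^m | ∑_{s=1}^{T} 1{p_s = M_i}(M_i − y_s) | ≤ ε T + (2C/(√2 − 1)) √T. -/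

import Mathlib

/-- Gridpoint M_i = (2i-1)/(2m). -/
noncomputable def Mg (m i : ℕ) : ℝ := (2 * (i : ℝ) - 1) / (2 * m)

open Finset

/-- Block induction: if each block's error is bounded, the cumulative error up to
any time `T` in block `K` is bounded by `ε T + C ∑_{k<K} √(2^k T0)`. -/
lemma aux_block (g : ℕ → ℕ → ℝ) (m T0 : ℕ) (ε C : ℝ) (hT0 : 1 ≤ T0)
    (hblock : ∀ k, 1 ≤ k → ∀ t, (2 ^ (k - 1) - 1) * T0 < t → t ≤ (2 ^ k - 1) * T0 →
      (∑ i ∈ Finset.Icc 1 m, |∑ s ∈ Finset.Icc ((2 ^ (k - 1) - 1) * T0 + 1) t, g i s|)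
        ≤ ε * ((t : ℝ) - ((2 ^ (k - 1) - 1) * T0 : ℕ)) + C * Real.sqrt ((2 ^ (k - 1) * T0 : ℕ))) :
    ∀ K, 1 ≤ K → ∀ T, (2 ^ (K - 1) - 1) * T0 < T → T ≤ (2 ^ K - 1) * T0 →
      (∑ i ∈ Finset.Icc 1 m, |∑ s ∈ Finset.Icc 1 T, g i s|)
        ≤ ε * T + C * ∑ k ∈ Finset.range K, Real.sqrt ((2 ^ k * T0 : ℕ)) := by
  intro K hK1
  induction K, hK1 using Nat.le_induction with
  | base =>
    intro T h1 h2
    have := hblock 1 le_rfl T (by simpa using h1) (by simpa using h2)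
    simpa using this
  | succ K hK IH =>
    intro T h1 h2
    set E : ℕ := (2 ^ K - 1) * T0 with hE
    have hET : E < T := by simpa [Nat.add_sub_cancel] using h1
    have hsplit : ∀ i, (∑ s ∈ Finset.Icc 1 T, g i s)
        = (∑ s ∈ Finset.Icc 1 E, g i s) + (∑ s ∈ Finset.Icc (E + 1) T, g i s) := by
      intro i
      have e : ∀ (a b : ℕ), Finset.Icc (a + 1) b = Finset.Ioc a b := by
        intro a b; ext x; simp only [Finset.mem_Icc, Finset.mem_Ioc]; omega
      have e1 : Finset.Icc 1 T = Finset.Ioc 0 T := e 0 T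
      have e2 : Finset.Icc 1 E = Finset.Ioc 0 E := e 0 E
      rw [e1, e2, e E T]
      exact (Finset.sum_Ioc_consecutive _ (Nat.zero_le E) hET.le).symm
    have step1 : (∑ i ∈ Finset.Icc 1 m, |∑ s ∈ Finset.Icc 1 T, g i s|)
        ≤ (∑ i ∈ Finset.Icc 1 m, |∑ s ∈ Finset.Icc 1 E, g i s|)
          + (∑ i ∈ Finset.Icc 1 m, |∑ s ∈ Finset.Icc (E + 1) T, g i s|) := by
      rw [← Finset.sum_add_distrib]
      refine Finset.sum_le_sum fun i _ => ?_
      rw [hsplit i]; exact abs_add_le _ _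
    have hE1 : (2 ^ (K - 1) - 1) * T0 < E := by
      have : 2 ^ (K - 1) - 1 < 2 ^ K - 1 := by
        have h2 : 2 ^ (K - 1) < 2 ^ K := Nat.pow_lt_pow_right one_lt_two (by omega)
        have h3 : 1 ≤ 2 ^ (K - 1) := Nat.one_le_two_pow
        omega
      have hp : 0 < T0 := by omega
      exact (Nat.mul_lt_mul_right hp).mpr this
    have IH' := IH E hE1 le_rfl
    have hb := hblock (K + 1) (by omega) T (by simpa [Nat.add_sub_cancel] using h1)
      (by simpa [Nat.add_sub_cancel] using h2)
    simp only [Nat.add_sub_cancel] at hb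
    have hsum : (ε * E + C * ∑ k ∈ Finset.range K, Real.sqrt ((2 ^ k * T0 : ℕ)))
        + (ε * ((T : ℝ) - (E : ℕ)) + C * Real.sqrt ((2 ^ K * T0 : ℕ)))
        = ε * T + C * ∑ k ∈ Finset.range (K + 1), Real.sqrt ((2 ^ k * T0 : ℕ)) := by
      rw [Finset.sum_range_succ]; ring
    calc (∑ i ∈ Finset.Icc 1 m, |∑ s ∈ Finset.Icc 1 T, g i s|)
        ≤ _ + _ := step1
      _ ≤ (ε * E + C * ∑ k ∈ Finset.range K, Real.sqrt ((2 ^ k * T0 : ℕ)))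
          + (ε * ((T : ℝ) - (E : ℕ)) + C * Real.sqrt ((2 ^ K * T0 : ℕ))) :=
        add_le_add IH' hb
      _ = _ := hsum

lemma aux_geom (C : ℝ) (hC : 0 < C) (T0 K T : ℕ) (hT0 : 1 ≤ T0) (hK : 3 ≤ K)
    (hT : 2 ^ (K - 2) * T0 ≤ T) :
    C * ∑ k ∈ Finset.range K, Real.sqrt ((2 ^ k * T0 : ℕ))
      ≤ (2 * C / (Real.sqrt 2 - 1)) * Real.sqrt T := by
  have hs2 : (1 : ℝ) < Real.sqrt 2 := by
    rw [show (1:ℝ) = Real.sqrt 1 from (Real.sqrt_one).symm]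
    exact Real.sqrt_lt_sqrt (by norm_num) (by norm_num)
  have hd : (0 : ℝ) < Real.sqrt 2 - 1 := by linarith
  have hterm : ∀ k : ℕ, Real.sqrt ((2 ^ k * T0 : ℕ)) = Real.sqrt 2 ^ k * Real.sqrt T0 := by
    intro k
    push_cast
    rw [Real.sqrt_mul (by positivity)]
    congr 1
    have h2 : ((Real.sqrt 2) ^ k) ^ 2 = (2 : ℝ) ^ k := by
      rw [← pow_mul, mul_comm, pow_mul, Real.sq_sqrt (by norm_num : (0:ℝ) ≤ 2)]
    rw [← h2, Real.sqrt_sq (by positivity)]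
  rw [Finset.sum_congr rfl fun k _ => hterm k, ← Finset.sum_mul,
    geom_sum_eq (ne_of_gt hs2)]
  have hpow : Real.sqrt 2 ^ K * Real.sqrt T0 ≤ 2 * Real.sqrt T := by
    have h4 : (2 : ℝ) ^ K = 4 * 2 ^ (K - 2) := by
      rw [show (4:ℝ) = 2^2 by norm_num, ← pow_add]
      congr 1; omega
    have e1 : Real.sqrt 2 ^ K * Real.sqrt T0 = Real.sqrt ((2:ℝ) ^ K * T0) := by
      rw [Real.sqrt_mul (by positivity)]
      congr 1
      have h2 : ((Real.sqrt 2) ^ K) ^ 2 = (2 : ℝ) ^ K := by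
        rw [← pow_mul, mul_comm, pow_mul, Real.sq_sqrt (by norm_num : (0:ℝ) ≤ 2)]
      rw [← h2, Real.sqrt_sq (by positivity)]
    rw [e1, h4, mul_assoc, show (4:ℝ) = 2^2 by norm_num, Real.sqrt_mul (by positivity),
      Real.sqrt_sq (by norm_num : (0:ℝ) ≤ 2)]
    have : Real.sqrt ((2:ℝ) ^ (K-2) * T0) ≤ Real.sqrt T := by
      apply Real.sqrt_le_sqrt
      exact_mod_cast Nat.cast_le.mpr hT
    linarith
  have hnum : (Real.sqrt 2 ^ K - 1) / (Real.sqrt 2 - 1) * Real.sqrt T0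
      ≤ (2 * Real.sqrt T) / (Real.sqrt 2 - 1) := by
    rw [div_mul_eq_mul_div, div_le_div_iff_of_pos_right hd]
    have hT0' : (0:ℝ) ≤ Real.sqrt T0 := Real.sqrt_nonneg _
    nlinarith [Real.sqrt_nonneg (T0:ℝ)]
  calc C * ((Real.sqrt 2 ^ K - 1) / (Real.sqrt 2 - 1) * Real.sqrt T0)
      ≤ C * ((2 * Real.sqrt T) / (Real.sqrt 2 - 1)) := by
        exact mul_le_mul_of_nonneg_left hnum hC.le
    _ = (2 * C / (Real.sqrt 2 - 1)) * Real.sqrt T := by ring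

/-- Proposition B.4, doubling trick: with block lengths
T_k = 2^k T₀ and endpoints T^{(k)} = (2^k − 1) T₀, if within each block k ≥ 1
the cumulative calibration error up to any time t in the block is at most
ε (t − T^{(k−1)}) + C √(T_{k−1}), then for every T > T^{(2)} the total
cumulative calibration error is at most ε T + (2C/(√2 − 1)) √T. -/
theorem doubling_trick_calibration (m : ℕ) (hm : 2 ≤ m) (C : ℝ) (hC : 0 < C)
    (T0 : ℕ) (hT0 : 1 ≤ T0)
    (y : ℕ → ℝ) (hy : ∀ t, y t = 0 ∨ y t = 1)
    (a : ℕ → ℕ) (ha : ∀ t, 1 ≤ t → 1 ≤ a t ∧ a t ≤ m)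
    (hblock : ∀ k, 1 ≤ k → ∀ t, (2 ^ (k - 1) - 1) * T0 < t → t ≤ (2 ^ k - 1) * T0 →
      (∑ i ∈ Finset.Icc 1 m,
          |∑ s ∈ Finset.Icc ((2 ^ (k - 1) - 1) * T0 + 1) t,
              (if a s = i then Mg m i - y s else 0)|)
        ≤ (1 / (2 * m)) * ((t : ℝ) - ((2 ^ (k - 1) - 1) * T0 : ℕ))
            + C * Real.sqrt ((2 ^ (k - 1) * T0 : ℕ))) :
    ∀ T : ℕ, (2 ^ 2 - 1) * T0 < T →
      (∑ i ∈ Finset.Icc 1 m,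
          |∑ s ∈ Finset.Icc 1 T, (if a s = i then Mg m i - y s else 0)|)
        ≤ (1 / (2 * m)) * T + (2 * C / (Real.sqrt 2 - 1)) * Real.sqrt T := by
  intro T hT
  have hPT : T ≤ (2 ^ T - 1) * T0 := by
    have h1 : T < 2 ^ T := Nat.lt_two_pow_self
    calc T ≤ 2 ^ T - 1 := by omega
      _ ≤ (2 ^ T - 1) * T0 := Nat.le_mul_of_pos_right _ (by omega)
  have hex : ∃ k, T ≤ (2 ^ k - 1) * T0 := ⟨T, hPT⟩
  set K := Nat.find hex with hKdef
  have hKle : T ≤ (2 ^ K - 1) * T0 := Nat.find_spec hex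
  have hK3 : 3 ≤ K := by
    by_contra h
    push_neg at h
    have hpow : 2 ^ K ≤ 2 ^ 2 := Nat.pow_le_pow_right (by norm_num) (by omega)
    have hmon : (2 ^ K - 1) * T0 ≤ (2 ^ 2 - 1) * T0 :=
      Nat.mul_le_mul_right _ (by omega)
    omega
  have hKlt : (2 ^ (K - 1) - 1) * T0 < T := by
    have := Nat.find_min hex (show K - 1 < K by omega)
    omega
  have main := aux_block (fun i s => if a s = i then Mg m i - y s else 0)
    m T0 (1 / (2 * (m : ℝ))) C hT0 hblock K (by omega) T hKlt hKle
  have hTge : 2 ^ (K - 2) * T0 ≤ T := by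
    have h1 : 2 ^ (K - 2) ≤ 2 ^ (K - 1) - 1 := by
      have h2 : 2 ^ (K - 1) = 2 * 2 ^ (K - 2) := by
        rw [← pow_succ']; congr 1; omega
      have h3 : 1 ≤ 2 ^ (K - 2) := Nat.one_le_two_pow
      omega
    calc 2 ^ (K - 2) * T0 ≤ (2 ^ (K - 1) - 1) * T0 := Nat.mul_le_mul_right _ h1
      _ ≤ T := hKlt.le
  have geo := aux_geom C hC T0 K T hT0 hK3 hTge
  exact main.trans (by linarith)
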